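/- arXiv:math/0609138 — 4 statements merged into one kernel-verified Lean document; each statement's English description precedes it below -/
import Mathlib

section
/- Let Λ be a finite-dimensional algebra, Q an injective module, and M a module in Sub Q with projective cover (in mod Λ) π : P → M with kernel Ω(M). Then the relative syzygy of M in Sub Q satisfies Ω_J(M) = Ω(M)/θ(Ω(M)), i.e. there is a short exact sequence 0 → Ω(M)/θ(Ω(M)) → P/θ(P) → M → 0, where P/θ(P) → M is the projective cover of M inside Sub Q. -/
/-- `M` lies in `Sub Q`: it embeds in a finite direct sum of copies of `Q`. -/
def InSubQ (Λ : Type) [Ring Λ] (Q : Type) [AddCommGroup Q] [Module Λ Q]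
    (M : Type) [AddCommGroup M] [Module Λ M] : Prop :=
  ∃ (n : ℕ) (f : M →ₗ[Λ] (Fin n → Q)), Function.Injective f

/-- `Sub Q` is closed under submodules (precomposition with injections). -/
lemma inSubQ_of_injective (Λ : Type) [Ring Λ] (Q : Type) [AddCommGroup Q] [Module Λ Q]
    {M N : Type} [AddCommGroup M] [Module Λ M] [AddCommGroup N] [Module Λ N]
    (f : N →ₗ[Λ] M) (hf : Function.Injective f) (h : InSubQ Λ Q M) : InSubQ Λ Q N := by
  obtain ⟨n, g, hg⟩ := h
  exact ⟨n, g ∘ₗ f, hg.comp hf⟩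

/-- Extension property of `Q` holds for finite powers of `Q`. -/
lemma ext_pi (Λ : Type) [Ring Λ] (Q : Type) [AddCommGroup Q] [Module Λ Q]
    (hQ : Module.Injective Λ Q)
    {X Y : Type} [AddCommGroup X] [Module Λ X] [AddCommGroup Y] [Module Λ Y]
    (i : X →ₗ[Λ] Y) (hi : Function.Injective i) (n : ℕ) (g : X →ₗ[Λ] (Fin n → Q)) :
    ∃ h : Y →ₗ[Λ] (Fin n → Q), ∀ x, h (i x) = g x := by
  choose h hh using fun j : Fin n => hQ.out i hi ((LinearMap.proj j) ∘ₗ g)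
  exact ⟨LinearMap.pi h, fun x => funext fun j => hh j x⟩

/-- Let `Λ` be a finite-dimensional algebra, `Q` an injective module, and `M ∈ Sub Q`
with projective cover `π : P → M` (in `mod Λ`), i.e. `P` projective, `π` surjective with
superfluous kernel `Ω(M) = ker π`.  Let `θ(P) ⊆ P` and `θ(Ω(M)) ⊆ Ω(M)` be the minimal
submodules with quotients in `Sub Q`.  Then there is a short exact sequence
`0 → Ω(M)/θ(Ω(M)) → P/θ(P) → M → 0` in which `P/θ(P) → M` is induced by `π` and is the
projective cover of `M` inside `Sub Q` (its kernel is superfluous). -/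
theorem stmt_5 (k Λ : Type) [Field k] [Ring Λ] [Algebra k Λ] [FiniteDimensional k Λ]
    (Q : Type) [AddCommGroup Q] [Module Λ Q]
    [Module k Q] [IsScalarTower k Λ Q] [FiniteDimensional k Q]
    (hQ : Module.Injective Λ Q)
    (M : Type) [AddCommGroup M] [Module Λ M]
    [Module k M] [IsScalarTower k Λ M] [FiniteDimensional k M]
    (hM : InSubQ Λ Q M)
    (P : Type) [AddCommGroup P] [Module Λ P]
    [Module k P] [IsScalarTower k Λ P] [FiniteDimensional k P]
    (hP : Module.Projective Λ P)
    (π : P →ₗ[Λ] M) (hπ : Function.Surjective π)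
    (hsmall : ∀ N : Submodule Λ P, N ⊔ LinearMap.ker π = ⊤ → N = ⊤)
    (θP : Submodule Λ P)
    (hθP₁ : InSubQ Λ Q (P ⧸ θP))
    (hθP₂ : ∀ N : Submodule Λ P, InSubQ Λ Q (P ⧸ N) → θP ≤ N)
    (θΩ : Submodule Λ ↥(LinearMap.ker π))
    (hθΩ₁ : InSubQ Λ Q (↥(LinearMap.ker π) ⧸ θΩ))
    (hθΩ₂ : ∀ N : Submodule Λ ↥(LinearMap.ker π),
      InSubQ Λ Q (↥(LinearMap.ker π) ⧸ N) → θΩ ≤ N) :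
    ∃ (a : (↥(LinearMap.ker π) ⧸ θΩ) →ₗ[Λ] (P ⧸ θP)) (b : (P ⧸ θP) →ₗ[Λ] M),
      Function.Injective a ∧ Function.Surjective b ∧
      LinearMap.range a = LinearMap.ker b ∧
      b ∘ₗ θP.mkQ = π ∧
      ∀ N : Submodule Λ (P ⧸ θP), N ⊔ LinearMap.ker b = ⊤ → N = ⊤ := by
  classical
  -- Step A: θP ≤ K
  have hPK : InSubQ Λ Q (P ⧸ LinearMap.ker π) :=
    inSubQ_of_injective Λ Q (π.quotKerEquivOfSurjective hπ).toLinearMap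
      (π.quotKerEquivOfSurjective hπ).injective hM
  have hθPK : θP ≤ LinearMap.ker π := hθP₂ _ hPK
  -- Step B: b
  set b : (P ⧸ θP) →ₗ[Λ] M := θP.liftQ π hθPK with hbdef
  have hb_comp : b ∘ₗ θP.mkQ = π := θP.liftQ_mkQ π hθPK
  have hb_surj : Function.Surjective b := by
    intro m
    obtain ⟨p, hp⟩ := hπ m
    exact ⟨θP.mkQ p, by rw [← hb_comp] at hp; exact hp⟩
  have hker_b : LinearMap.ker b = (LinearMap.ker π).map θP.mkQ := θP.ker_liftQ π hθPK
  -- θP' : θP viewed inside K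
  set θP' : Submodule Λ (LinearMap.ker π) := θP.comap (LinearMap.ker π).subtype with hθP'def
  have hker_ms : LinearMap.ker (θP.mkQ ∘ₗ (LinearMap.ker π).subtype) = θP' := by
    rw [LinearMap.ker_comp, Submodule.ker_mkQ]
  -- Step D(≤): θΩ ≤ θP'
  have hθΩle : θΩ ≤ θP' := by
    apply hθΩ₂
    have hle : θP' ≤ LinearMap.ker (θP.mkQ ∘ₗ (LinearMap.ker π).subtype) := le_of_eq hker_ms.symm
    refine inSubQ_of_injective Λ Q (θP'.liftQ (θP.mkQ ∘ₗ (LinearMap.ker π).subtype) hle) ?_ hθP₁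
    rw [← LinearMap.ker_eq_bot, Submodule.ker_liftQ, hker_ms, Submodule.mkQ_map_self]
  -- Step D(≥): θP' ≤ θΩ, via extension closedness
  set θΩ' : Submodule Λ P := θΩ.map (LinearMap.ker π).subtype with hθΩ'def
  have hθΩ'K : θΩ' ≤ LinearMap.ker π := by
    rw [hθΩ'def]
    exact (Submodule.map_subtype_le _ θΩ)
  set bΩ : (P ⧸ θΩ') →ₗ[Λ] M := θΩ'.liftQ π hθΩ'K with hbΩdef
  have hθΩcm : θΩ ≤ LinearMap.ker (θΩ'.mkQ ∘ₗ (LinearMap.ker π).subtype) := by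
    rw [LinearMap.ker_comp, Submodule.ker_mkQ]
    exact Submodule.le_comap_map _ _
  set jΩ : ((LinearMap.ker π) ⧸ θΩ) →ₗ[Λ] (P ⧸ θΩ') := θΩ.liftQ (θΩ'.mkQ ∘ₗ (LinearMap.ker π).subtype) hθΩcm with hjΩdef
  have hjΩinj : Function.Injective jΩ := by
    rw [← LinearMap.ker_eq_bot, Submodule.ker_liftQ, LinearMap.ker_comp, Submodule.ker_mkQ,
      hθΩ'def, Submodule.comap_map_eq, Submodule.ker_subtype, sup_bot_eq,
      Submodule.mkQ_map_self]
  have hrange_jΩ : LinearMap.range jΩ = (LinearMap.ker π).map θΩ'.mkQ := by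
    rw [hjΩdef, Submodule.range_liftQ, LinearMap.range_comp, Submodule.range_subtype]
  have hker_bΩ : LinearMap.ker bΩ = (LinearMap.ker π).map θΩ'.mkQ := θΩ'.ker_liftQ π hθΩ'K
  obtain ⟨n, f, hf⟩ := hθΩ₁
  obtain ⟨g, hg⟩ := ext_pi Λ Q hQ jΩ hjΩinj n f
  obtain ⟨m, e, he⟩ := hM
  have hPθΩ' : InSubQ Λ Q (P ⧸ θΩ') := by
    refine ⟨n + m, LinearMap.pi (fun j : Fin (n + m) =>
      if h : (j : ℕ) < n then (LinearMap.proj (⟨j, h⟩ : Fin n)) ∘ₗ g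
      else (LinearMap.proj (⟨(j : ℕ) - n, by omega⟩ : Fin m)) ∘ₗ (e ∘ₗ bΩ)), ?_⟩
    rw [← LinearMap.ker_eq_bot]
    rw [Submodule.eq_bot_iff]
    intro x hx
    rw [LinearMap.mem_ker] at hx
    have hcomp : ∀ j : Fin (n + m), (if h : (j : ℕ) < n then g x ⟨j, h⟩
        else e (bΩ x) ⟨(j : ℕ) - n, by omega⟩) = 0 := by
      intro j
      have := congrFun hx j
      simp only [LinearMap.pi_apply] at this
      split_ifs with h
      · simpa [h] using this
      · simpa [h] using this
    have hbΩx : bΩ x = 0 := by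
      have : e (bΩ x) = 0 := by
        funext i
        have := hcomp ⟨n + i, by omega⟩
        simp only [Nat.add_sub_cancel_left, dif_neg (by omega : ¬ (n + (i : ℕ) < n))] at this
        simpa using this
      have h0 : e (bΩ x) = e 0 := by simpa using this
      exact he h0
    have hxmem : x ∈ LinearMap.range jΩ := by
      rw [hrange_jΩ, ← hker_bΩ]
      exact hbΩx
    obtain ⟨y, hy⟩ := hxmem
    have hfy : f y = 0 := by
      funext i
      have := hcomp ⟨i, by omega⟩
      simp only [dif_pos i.isLt] at this
      rw [← hy, hg] at this
      simpa using this
    have hy0 : y = 0 := hf (by simpa using hfy)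
    rw [← hy, hy0, map_zero]
  have hθPθΩ' : θP ≤ θΩ' := hθP₂ θΩ' hPθΩ'
  have hθP'le : θP' ≤ θΩ := by
    intro x hx
    have : ((LinearMap.ker π).subtype x) ∈ θΩ' := hθPθΩ' hx
    obtain ⟨y, hy, hyx⟩ := this
    have : y = x := Subtype.ext hyx
    rwa [← this]
  have hθeq : θΩ = θP' := le_antisymm hθΩle hθP'le
  -- Step E: a
  have hacond : θΩ ≤ LinearMap.ker (θP.mkQ ∘ₗ (LinearMap.ker π).subtype) := by
    rw [hker_ms, hθeq]
  set a : ((LinearMap.ker π) ⧸ θΩ) →ₗ[Λ] (P ⧸ θP) := θΩ.liftQ (θP.mkQ ∘ₗ (LinearMap.ker π).subtype) hacond with hadef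
  have ha_inj : Function.Injective a := by
    rw [← LinearMap.ker_eq_bot, Submodule.ker_liftQ, hker_ms, ← hθeq,
      Submodule.mkQ_map_self]
  have hrange_a : LinearMap.range a = LinearMap.ker b := by
    rw [hadef, Submodule.range_liftQ, LinearMap.range_comp, Submodule.range_subtype, hker_b]
  -- Step G: superfluous kernel
  refine ⟨a, b, ha_inj, hb_surj, hrange_a, hb_comp, ?_⟩
  intro N hN
  have hN' : N.comap θP.mkQ ⊔ LinearMap.ker π = ⊤ := by
    rw [eq_top_iff]
    intro p _
    have hp : θP.mkQ p ∈ N ⊔ LinearMap.ker b := hN ▸ Submodule.mem_top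
    obtain ⟨u, hu, v, hv, huv⟩ := Submodule.mem_sup.mp hp
    rw [hker_b] at hv
    obtain ⟨q, hq, hqv⟩ := hv
    refine Submodule.mem_sup.mpr ⟨p - q, ?_, q, hq, by abel⟩
    have : θP.mkQ (p - q) = u := by
      rw [map_sub, hqv, ← huv]; abel
    simp only [Submodule.mem_comap, this]
    exact hu
  have : N.comap θP.mkQ = ⊤ := hsmall _ hN'
  rw [eq_top_iff]
  intro x _
  obtain ⟨p, rfl⟩ := θP.mkQ_surjective x
  have hp : p ∈ N.comap θP.mkQ := this ▸ Submodule.mem_top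
  exact hp
end

section
/- Let q(y₁,…,y_{2n}) = Σ_{i=1}^{n} (−1)^i y_i y_{2n+1−i} on ℂ^{2n} with n ≥ 4, and for 3 ≤ k ≤ n−1 define p_k = z_{n+1−k} z_{n+k} − z_{n−k} z_{n+k+1} + ⋯ + (−1)^{n−k−1} z₂ z_{2n−1} + (−1)^{n−k} z_{2n}, i.e. p_k = Σ_{m=0}^{n−k−1} (−1)^m z_{n+1−k−m} z_{n+k+m} + (−1)^{n−k} z_{2n} with z₁ = 1. Then in the quotient ring ℂ[z₂,…,z_{2n}]/(q(1,z₂,…,z_{2n})), the exchange relations z_k z_{2n−k+1} = p_{n−k+1} + p_{n−k+2} hold for 3 ≤ k ≤ n−2, where p₁ := z_n, p₂ := z_{n+1}, p_n := z_{2n}. -/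
/-- The elements `p_k` of the coordinate ring of the affine cell of the quadric:
`p 1 = z n`, `p 2 = z (n+1)`, and for `3 ≤ k ≤ n`,
`p k = Σ_{m=0}^{n-k-1} (−1)^m z_{n+1−k−m} z_{n+k+m} + (−1)^{n−k} z_{2n}`
(in particular `p n = z (2n)`). -/
def pQuad {A : Type} [CommRing A] (n : ℕ) (z : ℕ → A) : ℕ → A := fun k =>
  if k = 1 then z n
  else if k = 2 then z (n + 1)
  else (∑ m ∈ Finset.range (n - k), (-1 : A) ^ m * z (n + 1 - k - m) * z (n + k + m))
    + (-1 : A) ^ (n - k) * z (2 * n)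

/-- In any commutative ring in which the quadric relation
`Σ_{i=1}^{n} (−1)^i z_i z_{2n+1−i} = 0` holds with `z 1 = 1` (equivalently, in the
quotient ring `ℂ[z₂,…,z_{2n}]/(q(1,z₂,…,z_{2n}))`), the exchange relations
`z_k z_{2n−k+1} = p_{n−k+1} + p_{n−k+2}` hold for `3 ≤ k ≤ n−2`, where `n ≥ 4`. -/
theorem stmt_10 {A : Type} [CommRing A] (n : ℕ) (hn : 4 ≤ n) (z : ℕ → A)
    (hz1 : z 1 = 1)
    (hq : ∑ i ∈ Finset.Icc 1 n, (-1 : A) ^ i * z i * z (2 * n + 1 - i) = 0)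
    (k : ℕ) (hk1 : 3 ≤ k) (hk2 : k ≤ n - 2) :
    z k * z (2 * n - k + 1) = pQuad n z (n - k + 1) + pQuad n z (n - k + 2) := by
  have h1 : n - k + 1 ≠ 1 := by omega
  have h2 : n - k + 1 ≠ 2 := by omega
  have h3 : n - k + 2 ≠ 1 := by omega
  have h4 : n - k + 2 ≠ 2 := by omega
  simp only [pQuad, if_neg h1, if_neg h2, if_neg h3, if_neg h4]
  have e1 : n - (n - k + 1) = k - 1 := by omega
  have e2 : n - (n - k + 2) = k - 2 := by omega
  rw [e1, e2]
  have i1 : ∀ m, n + 1 - (n - k + 1) - m = k - m := fun m => by omega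
  have i2 : ∀ m, n + (n - k + 1) + m = 2 * n + 1 - k + m := fun m => by omega
  have i3 : ∀ m, n + 1 - (n - k + 2) - m = k - 1 - m := fun m => by omega
  have i4 : ∀ m, n + (n - k + 2) + m = 2 * n + 2 - k + m := fun m => by omega
  simp only [i1, i2, i3, i4]
  have hr : k - 1 = (k - 2) + 1 := by omega
  rw [hr, Finset.sum_range_succ']
  have hterm : ∀ i, (-1 : A) ^ (i + 1) * z (k - (i + 1)) * z (2 * n + 1 - k + (i + 1))
      = -((-1 : A) ^ i * z (k - 1 - i) * z (2 * n + 2 - k + i)) := by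
    intro i
    have a1 : k - (i + 1) = k - 1 - i := by omega
    have a2 : 2 * n + 1 - k + (i + 1) = 2 * n + 2 - k + i := by omega
    rw [a1, a2, pow_succ]
    ring
  rw [Finset.sum_congr rfl (fun i _ => hterm i), Finset.sum_neg_distrib]
  have hp : (-1 : A) ^ (k - 2 + 1) = -(-1 : A) ^ (k - 2) := by rw [pow_succ]; ring
  have hz : 2 * n - k + 1 = 2 * n + 1 - k + 0 := by omega
  rw [hp, hz]
  simp only [show ∀ x : ℕ, k - 2 + 1 - x = k - 1 - x from fun x => by omega, Nat.sub_zero,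
    pow_zero]
  ring
end

section
/- With notation as in the quadric coordinate ring: in ℂ[z₂,…,z_{2n}]/(q(1,z₂,…,z_{2n})), the relation z_{n−1} z_{n+2} = p₁ p₂ + p₃ holds, where p₁ = z_n, p₂ = z_{n+1}, and p₃ = Σ_{m=0}^{n−4}(−1)^m z_{n−2−m} z_{n+3+m} + (−1)^{n−3} z_{2n} (with z₁ = 1, interpreting indices appropriately). (Case k = n−1 of the exchange relations on the quadric.) -/
/-!
Reindexing the quadric relation by `i ↦ n - i` and dividing by the unit `(-1)^n` turns it into
`Σ_{j<n} (-1)^j z_{n-j} z_{n+1+j} = 0`. The terms `j = 0, 1` are `z_n z_{n+1}` and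
`-z_{n-1} z_{n+2}`, the term `j = n - 1` is `(-1)^{n-1} z_{2n}` because `z_1 = 1`, and the
remaining terms `2 ≤ j ≤ n - 2` form the sum in `p₃`.
-/

open Finset

theorem sum_Icc_neg_one_pow_mul_eq_reflect {A : Type} [CommRing A] (n : ℕ) (z : ℕ → A) :
    ∑ i ∈ Icc 1 n, (-1 : A) ^ i * z i * z (2 * n + 1 - i) =
      (-1) ^ n * ∑ j ∈ range n, (-1 : A) ^ j * z (n - j) * z (n + 1 + j) := by
  rw [mul_sum]
  refine sum_nbij' (n - ·) (n - ·) ?_ ?_ ?_ ?_ ?_ <;> simp only [mem_Icc, mem_range]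
  · intro i hi; omega
  · intro j hj; omega
  · intro i hi; omega
  · intro j hj; omega
  · rintro i ⟨-, hin⟩
    obtain ⟨j, rfl⟩ := Nat.exists_eq_add_of_le hin
    rw [Nat.sub_sub_self hin, Nat.add_sub_cancel_left, pow_add,
      show 2 * (i + j) + 1 - i = i + j + 1 + j by omega]
    have hsq : (-1 : A) ^ j * (-1) ^ j = 1 := pow_mul_pow_eq_one j (by norm_num)
    linear_combination -((-1) ^ i * z i * z (i + j + 1 + j)) * hsq

/-- In any commutative ring in which the quadric relation
`Σ_{i=1}^{n} (−1)^i z_i z_{2n+1−i} = 0` holds with `z 1 = 1` (equivalently, in the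
quotient ring `ℂ[z₂,…,z_{2n}]/(q(1,z₂,…,z_{2n}))`), the exchange relation
`z_{n−1} z_{n+2} = p₁ p₂ + p₃` holds, where `p₁ = z n`, `p₂ = z (n+1)` and
`p₃ = Σ_{m=0}^{n−4} (−1)^m z_{n−2−m} z_{n+3+m} + (−1)^{n−3} z_{2n}`. -/
theorem stmt_11 {A : Type} [CommRing A] (n : ℕ) (hn : 4 ≤ n) (z : ℕ → A)
    (hz1 : z 1 = 1)
    (hq : ∑ i ∈ Finset.Icc 1 n, (-1 : A) ^ i * z i * z (2 * n + 1 - i) = 0) :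
    z (n - 1) * z (n + 2) = pQuad n z 1 * pQuad n z 2 + pQuad n z 3 := by
  obtain ⟨k, rfl⟩ := Nat.exists_eq_add_of_le' hn
  rw [sum_Icc_neg_one_pow_mul_eq_reflect, (isUnit_neg_one.pow _).mul_right_eq_zero,
    sum_range_succ', sum_range_succ', sum_range_succ] at hq
  have hmiddle : ∑ m ∈ range (k + 1),
        (-1 : A) ^ (m + 1 + 1) * z (k + 4 - (m + 1 + 1)) * z (k + 4 + 1 + (m + 1 + 1)) =
      ∑ m ∈ range (k + 1), (-1 : A) ^ m * z (k + 4 + 1 - 3 - m) * z (k + 4 + 3 + m) := by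
    refine sum_congr rfl fun m _ => ?_
    rw [show k + 4 - (m + 1 + 1) = k + 4 + 1 - 3 - m by omega,
      show k + 4 + 1 + (m + 1 + 1) = k + 4 + 3 + m by omega]
    ring
  rw [hmiddle, show k + 4 - (k + 3) = 1 by omega, hz1] at hq
  simp only [pQuad, show k + 4 - 3 = k + 1 from rfl]
  norm_num at hq ⊢
  ring_nf at hq ⊢
  linear_combination -hq
end

section
/- Let Λ be a finite-dimensional algebra over ℂ with symmetric Ext¹ dimensions, and let X, T be modules with X ⊕ T rigid, X indecomposable. Let f : T' → X be a surjective minimal right add(T)-approximation with kernel Y. If Ext¹(T ⊕ Y, T ⊕ Y) = 0 and Ext¹(X, Y) is one-dimensional, then the short exact sequence 0 → Y → T' → X → 0 is non-split and is, up to isomorphism of extensions, the unique non-split extension of X by Y. -/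
open CategoryTheory Opposite Module

/-- `Ext¹_Λ(M, N)` as a `ℂ`-vector space, for a finite-dimensional `ℂ`-algebra `Λ`. -/
noncomputable def ext1 (Λ : Type) [Ring Λ] [Algebra ℂ Λ] (M N : ModuleCat Λ) :
    ModuleCat ℂ :=
  ((Ext ℂ (ModuleCat Λ) 1).obj (op M)).obj N

/-- `X ∈ add T`: `X` is a direct summand of a finite direct sum of copies of `T`. -/
def IsAddSummand (Λ : Type) [Ring Λ] (T : Type) [AddCommGroup T] [Module Λ T]
    (X : Type) [AddCommGroup X] [Module Λ X] : Prop :=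
  ∃ (n : ℕ) (ι : X →ₗ[Λ] (Fin n → T)) (ρ : (Fin n → T) →ₗ[Λ] X), ρ ∘ₗ ι = LinearMap.id

/-!
`Y ≠ 0` because `Ext¹(X, Y) ≠ 0`, so a section `s` of `f` is impossible: `s ∘ f` would be an
endomorphism of `T'` over `X` killing `Y`, against minimality of `f`.

For uniqueness, compute `Ext¹(X, Y)` from a projective resolution `P₂ → P₁ → P₀ → X`. Lifting
`P₀ → X` through an extension `0 → Y → E → X → 0` gives a cocycle `P₁ → Y`, and an extension
whose cocycle is a coboundary splits. Since `Ext¹(X, Y)` is a line, the cocycle of `T'` is `c`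
times that of `E` up to a coboundary; as `E` is the pushout of `P₀ ← P₁ → Y`, this yields a map
`E → T'` over `X` that is multiplication by `c` on `Y`. Non-splitness of `T'` forces `c ≠ 0`, and
the five lemma makes the map an isomorphism.
-/

section Extensions

variable {R : Type*} [Ring R] {P₀ P₁ X Y E E' W : Type*}
  [AddCommGroup P₀] [Module R P₀] [AddCommGroup P₁] [Module R P₁]
  [AddCommGroup X] [Module R X] [AddCommGroup Y] [Module R Y]
  [AddCommGroup E] [Module R E] [AddCommGroup E'] [Module R E'] [AddCommGroup W] [Module R W]

theorem LinearMap.exists_comp_eq_of_ker_le {π : E →ₗ[R] X} (hπ : Function.Surjective π)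
    {u : E →ₗ[R] W} (h : LinearMap.ker π ≤ LinearMap.ker u) : ∃ g : X →ₗ[R] W, g ∘ₗ π = u :=
  ⟨(LinearMap.ker π).liftQ u h ∘ₗ (π.quotKerEquivOfSurjective hπ).symm.toLinearMap, by
    ext x
    simp⟩

theorem LinearMap.exists_comp_eq_of_range_le {i : Y →ₗ[R] E} (hi : Function.Injective i)
    {u : W →ₗ[R] E} (h : LinearMap.range u ≤ LinearMap.range i) : ∃ g : W →ₗ[R] Y, i ∘ₗ g = u :=
  ⟨(LinearEquiv.ofInjective i hi).symm.toLinearMap ∘ₗ u.codRestrict _ fun w => h ⟨w, rfl⟩, by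
    ext w
    simp⟩

namespace Function.Exact

variable {i : Y →ₗ[R] E} {p : E →ₗ[R] X} (hex : Function.Exact i p)
include hex

theorem exists_add_eq {α : P₀ →ₗ[R] E} (hα : Function.Surjective (p ∘ₗ α)) (e : E) :
    ∃ q y, α q + i y = e := by
  obtain ⟨q, hq⟩ := hα (p e)
  obtain ⟨y, hy⟩ := (hex (e - α q)).1 (by simp [← hq])
  exact ⟨q, y, by rw [hy, add_sub_cancel]⟩

theorem linearMap_ext {α : P₀ →ₗ[R] E} (hα : Function.Surjective (p ∘ₗ α)) {u v : E →ₗ[R] W}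
    (hui : u ∘ₗ i = v ∘ₗ i) (huα : u ∘ₗ α = v ∘ₗ α) : u = v := by
  ext e
  obtain ⟨q, y, rfl⟩ := hex.exists_add_eq hα e
  have hq : u (α q) = v (α q) := LinearMap.congr_fun huα q
  have hy : u (i y) = v (i y) := LinearMap.congr_fun hui y
  rw [map_add, map_add, hq, hy]

/-- `E` is the pushout of `P₀ ← P₁ → Y`. -/
theorem exists_comp_eq_and_comp_eq (hi : Function.Injective i) {d : P₁ →ₗ[R] P₀}
    {α₀ : P₀ →ₗ[R] E} (hd : Function.Exact d (p ∘ₗ α₀)) (hπ : Function.Surjective (p ∘ₗ α₀))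
    {α₁ : P₁ →ₗ[R] Y} (hα : i ∘ₗ α₁ = α₀ ∘ₗ d) (ψ : Y →ₗ[R] W) (w : P₀ →ₗ[R] W)
    (hw : w ∘ₗ d = ψ ∘ₗ α₁) : ∃ g : E →ₗ[R] W, g ∘ₗ i = ψ ∧ g ∘ₗ α₀ = w := by
  have hsurj : Function.Surjective (α₀.coprod i) := fun e => by
    obtain ⟨q, y, h⟩ := hex.exists_add_eq hπ e
    exact ⟨(q, y), h⟩
  obtain ⟨g, hg⟩ := LinearMap.exists_comp_eq_of_ker_le hsurj (u := w.coprod ψ) <| by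
    rintro ⟨q, y⟩ h
    replace h : α₀ q = -i y := eq_neg_of_add_eq_zero_left h
    obtain ⟨r, rfl⟩ := (hd q).1 (by simp [h, hex.apply_apply_eq_zero])
    have hy : y = -α₁ r := hi <| by
      rw [map_neg, ← LinearMap.comp_apply, hα, LinearMap.comp_apply, h, neg_neg]
    have hr : w (d r) = ψ (α₁ r) := LinearMap.congr_fun hw r
    simp [hy, hr]
  refine ⟨g, ?_, ?_⟩
  · rw [← LinearMap.coprod_inr α₀ i, ← LinearMap.comp_assoc, hg, LinearMap.coprod_inr]
  · rw [← LinearMap.coprod_inl α₀ i, ← LinearMap.comp_assoc, hg, LinearMap.coprod_inl]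

theorem exists_section_of_comp_eq_zero (hp : Function.Surjective p) {p' : E' →ₗ[R] X}
    {h : E →ₗ[R] E'} (hh : p' ∘ₗ h = p) (hhi : h ∘ₗ i = 0) :
    ∃ s : X →ₗ[R] E', p' ∘ₗ s = LinearMap.id := by
  obtain ⟨s, hs⟩ := LinearMap.exists_comp_eq_of_ker_le hp (u := h) <| by
    rwa [hex.linearMap_ker_eq, LinearMap.range_le_ker_iff]
  refine ⟨s, (LinearMap.cancel_right hp).1 ?_⟩
  rw [LinearMap.comp_assoc, hs, hh, LinearMap.id_comp]

theorem not_exists_section_of_forall_bijective [Nontrivial Y] (hi : Function.Injective i)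
    (hmin : ∀ e : E →ₗ[R] E, p ∘ₗ e = p → Function.Bijective e) :
    ¬ ∃ s : X →ₗ[R] E, p ∘ₗ s = LinearMap.id := by
  rintro ⟨s, hs⟩
  obtain ⟨y, hy⟩ := exists_ne (0 : Y)
  have := (hmin (s ∘ₗ p) (by rw [← LinearMap.comp_assoc, hs, LinearMap.id_comp])).1
    (a₁ := i y) (a₂ := 0) (by simp [hex.apply_apply_eq_zero])
  exact hy (hi (by simpa using this))

theorem exists_section_of_eq_comp (hi : Function.Injective i) (hp : Function.Surjective p)
    {d : P₁ →ₗ[R] P₀} {α₀ : P₀ →ₗ[R] E} (hd : Function.Exact d (p ∘ₗ α₀))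
    (hπ : Function.Surjective (p ∘ₗ α₀)) {α₁ : P₁ →ₗ[R] Y} (hα : i ∘ₗ α₁ = α₀ ∘ₗ d)
    {w : P₀ →ₗ[R] Y} (hw : w ∘ₗ d = α₁) : ∃ s : X →ₗ[R] E, p ∘ₗ s = LinearMap.id := by
  obtain ⟨g, hg, -⟩ := hex.exists_comp_eq_and_comp_eq hi hd hπ hα LinearMap.id w
    (by rw [hw, LinearMap.id_comp])
  have hsplit := (hex.split_tfae hi hp).out 1 0
  exact hsplit.1 ⟨g, hg⟩

theorem bijective_of_comp_eq {i' : Y →ₗ[R] E'} {p' : E' →ₗ[R] X} (hex' : Function.Exact i' p')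
    (hi' : Function.Injective i') (hp : Function.Surjective p) {φ : Y →ₗ[R] Y}
    (hφ : Function.Bijective φ) {g : E →ₗ[R] E'} (hgi : g ∘ₗ i = i' ∘ₗ φ) (hgp : p' ∘ₗ g = p) :
    Function.Bijective g := by
  have hgi' (y : Y) : g (i y) = i' (φ y) := LinearMap.congr_fun hgi y
  have hgp' (e : E) : p' (g e) = p e := LinearMap.congr_fun hgp e
  refine ⟨(injective_iff_map_eq_zero g).2 fun e he => ?_, fun e' => ?_⟩
  · obtain ⟨y, rfl⟩ := (hex e).1 (by rw [← hgp', he, map_zero])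
    rw [hgi', ← map_zero i', hi'.eq_iff, ← map_zero φ, hφ.1.eq_iff] at he
    rw [he, map_zero]
  · obtain ⟨e, he⟩ := hp (p' e')
    obtain ⟨y', hy'⟩ := (hex' (e' - g e)).1 (by rw [map_sub, hgp', he, sub_self])
    obtain ⟨y, rfl⟩ := hφ.2 y'
    exact ⟨e + i y, by rw [map_add, hgi', hy', add_sub_cancel]⟩

end Function.Exact

end Extensions

theorem Submodule.exists_sub_smul_mem_of_finrank_quotient_eq_one {K V : Type*} [Field K]
    [AddCommGroup V] [Module K V] {B : Submodule K V} (h : finrank K (V ⧸ B) = 1) {v₀ : V}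
    (hv₀ : v₀ ∉ B) (v : V) : ∃ c : K, v - c • v₀ ∈ B := by
  have hne : B.mkQ v₀ ≠ 0 := by rwa [ne_eq, Submodule.mkQ_apply, Submodule.Quotient.mk_eq_zero]
  obtain ⟨c, hc⟩ := (finrank_eq_one_iff_of_nonzero' _ hne).1 h (B.mkQ v)
  exact ⟨c, by rw [← Submodule.Quotient.mk_eq_zero, Submodule.Quotient.mk_sub,
    Submodule.Quotient.mk_smul, ← Submodule.mkQ_apply, ← Submodule.mkQ_apply, hc, sub_self]⟩

universe u v

namespace CategoryTheory.ProjectiveResolution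

section

variable {R : Type u} [Ring R] {M : ModuleCat.{v} R} (P : ProjectiveResolution M)

theorem surjective_π_f_zero : Function.Surjective (P.π.f 0).hom :=
  (ModuleCat.epi_iff_surjective _).1 inferInstance

theorem exact_d_one_zero_π_f_zero : Function.Exact (P.complex.d 1 0).hom (P.π.f 0).hom :=
  LinearMap.exact_iff.2
    (ShortComplex.exact_of_g_is_cokernel (.mk _ _ P.complex_d_comp_π_f_zero)
      P.isColimitCokernelCofork).moduleCat_range_eq_ker.symm

end

theorem exists_cocycle {R : Type u} [Ring R] {X Y E : Type v} [AddCommGroup X] [Module R X]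
    [AddCommGroup Y] [Module R Y] [AddCommGroup E] [Module R E] (P : ProjectiveResolution (ModuleCat.of R X))
    {i : Y →ₗ[R] E} {p : E →ₗ[R] X} (hi : Function.Injective i) (hex : Function.Exact i p)
    (hp : Function.Surjective p) :
    ∃ (α₀ : P.complex.X 0 →ₗ[R] E) (α₁ : P.complex.X 1 →ₗ[R] Y), p ∘ₗ α₀ = (P.π.f 0).hom ∧
      i ∘ₗ α₁ = α₀ ∘ₗ (P.complex.d 1 0).hom ∧ α₁ ∘ₗ (P.complex.d 2 1).hom = 0 := by
  have : Epi (ModuleCat.ofHom p) := (ModuleCat.epi_iff_surjective _).2 hp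
  let π : P.complex.X 0 ⟶ ModuleCat.of R X := P.π.f 0
  let α₀ := (Projective.factorThru π (ModuleCat.ofHom p)).hom
  have hα₀ : p ∘ₗ α₀ = π.hom := congrArg ModuleCat.Hom.hom (Projective.factorThru_comp π _)
  obtain ⟨α₁, hα₁⟩ :=
      LinearMap.exists_comp_eq_of_range_le hi (u := α₀ ∘ₗ (P.complex.d 1 0).hom) <| by
    rw [← hex.linearMap_ker_eq, LinearMap.range_le_ker_iff, ← LinearMap.comp_assoc, hα₀]
    exact congrArg ModuleCat.Hom.hom P.complex_d_comp_π_f_zero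
  refine ⟨α₀, α₁, hα₀, hα₁, LinearMap.ext fun x => hi ?_⟩
  have hα₁x := LinearMap.congr_fun hα₁ ((P.complex.d 2 1).hom x)
  have hdd : (P.complex.d 1 0).hom ((P.complex.d 2 1).hom x) = 0 :=
    congr($(P.complex.d_comp_d 2 1 0).hom x)
  simp only [LinearMap.comp_apply, LinearMap.zero_apply, map_zero] at hα₁x ⊢
  rw [hα₁x, hdd, map_zero]

variable {Λ : Type} [Ring Λ] [Algebra ℂ Λ] {M : ModuleCat Λ} (P : ProjectiveResolution M)
  (N : ModuleCat Λ)

noncomputable abbrev homShortComplex : ShortComplex (ModuleCat ℂ) :=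
  (P.complex.linearYonedaObj ℂ N).sc' 0 1 2

noncomputable def ext1Iso : ext1 Λ M N ≅ (P.homShortComplex N).moduleCatLeftHomologyData.H :=
  P.isoExt 1 N ≪≫ ShortComplex.homologyMapIso
      ((HomologicalComplex.natIsoSc' _ _ 0 1 2 (by simp) (by simp)).app _) ≪≫
    ShortComplex.moduleCatHomologyIso _

variable {N}

theorem ofHom_mem_ker_g_iff (u : P.complex.X 1 →ₗ[Λ] N) :
    ModuleCat.ofHom u ∈ LinearMap.ker (P.homShortComplex N).g.hom ↔
      u ∘ₗ (P.complex.d 2 1).hom = 0 := by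
  change P.complex.d 2 1 ≫ ModuleCat.ofHom u = 0 ↔ _
  rw [ModuleCat.hom_ext_iff, ModuleCat.hom_comp, ModuleCat.hom_ofHom, ModuleCat.hom_zero]

theorem mem_range_moduleCatToCycles_iff (u : P.complex.X 1 →ₗ[Λ] N)
    (hu : ModuleCat.ofHom u ∈ LinearMap.ker (P.homShortComplex N).g.hom) :
    ⟨ModuleCat.ofHom u, hu⟩ ∈ LinearMap.range (P.homShortComplex N).moduleCatToCycles ↔
      ∃ w : P.complex.X 0 →ₗ[Λ] N, w ∘ₗ (P.complex.d 1 0).hom = u := by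
  simp only [LinearMap.mem_range, Subtype.ext_iff]
  change (∃ w : P.complex.X 0 ⟶ N, P.complex.d 1 0 ≫ w = ModuleCat.ofHom u) ↔ _
  simp only [ModuleCat.hom_ext_iff, ModuleCat.hom_comp, ModuleCat.hom_ofHom]
  exact ⟨fun ⟨w, hw⟩ => ⟨w.hom, hw⟩, fun ⟨w, hw⟩ => ⟨ModuleCat.ofHom w, hw⟩⟩

theorem exists_eq_smul_add_of_finrank_ext1_eq_one (hdim : finrank ℂ (ext1 Λ M N) = 1)
    {z₀ z : P.complex.X 1 →ₗ[Λ] N} (hz₀ : z₀ ∘ₗ (P.complex.d 2 1).hom = 0)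
    (hz : z ∘ₗ (P.complex.d 2 1).hom = 0)
    (hz₀' : ¬ ∃ w : P.complex.X 0 →ₗ[Λ] N, w ∘ₗ (P.complex.d 1 0).hom = z₀) :
    ∃ (c : ℂ) (w : P.complex.X 0 →ₗ[Λ] N),
      ∀ x, z x = algebraMap ℂ Λ c • z₀ x + w ((P.complex.d 1 0).hom x) := by
  obtain ⟨c, w, hw⟩ := Submodule.exists_sub_smul_mem_of_finrank_quotient_eq_one
    ((P.ext1Iso N).toLinearEquiv.finrank_eq.symm.trans hdim)
    (v₀ := ⟨_, (P.ofHom_mem_ker_g_iff z₀).2 hz₀⟩) (by rwa [mem_range_moduleCatToCycles_iff])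
    ⟨_, (P.ofHom_mem_ker_g_iff z).2 hz⟩
  refine ⟨c, w.hom, fun x => ?_⟩
  have hwx : w.hom ((P.complex.d 1 0).hom x) = z x - algebraMap ℂ Λ c • z₀ x :=
    congr($(congrArg Subtype.val hw).hom x)
  rw [hwx, add_sub_cancel]

end CategoryTheory.ProjectiveResolution

theorem finrank_ext1_eq_zero_of_subsingleton {Λ : Type} [Ring Λ] [Algebra ℂ Λ]
    (M N : ModuleCat Λ) [Subsingleton N] : finrank ℂ (ext1 Λ M N) = 0 := by
  let P := ProjectiveResolution.of M
  have : Subsingleton (P.homShortComplex N).X₂ := ⟨fun a b =>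
    show (a : P.complex.X 1 ⟶ N) = b from
      ModuleCat.hom_ext (LinearMap.ext fun _ => Subsingleton.elim _ _)⟩
  have : Subsingleton (P.homShortComplex N).moduleCatLeftHomologyData.H :=
    inferInstanceAs (Subsingleton (_ ⧸ LinearMap.range (P.homShortComplex N).moduleCatToCycles))
  rw [(P.ext1Iso N).toLinearEquiv.finrank_eq]
  exact finrank_zero_of_subsingleton

theorem exists_linearEquiv_of_finrank_ext1_eq_one {Λ : Type} [Ring Λ] [Algebra ℂ Λ]
    {X Y E E' : Type} [AddCommGroup X] [Module Λ X] [AddCommGroup Y] [Module Λ Y]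
    [AddCommGroup E] [Module Λ E] [AddCommGroup E'] [Module Λ E']
    (hdim : finrank ℂ (ext1 Λ (ModuleCat.of Λ X) (ModuleCat.of Λ Y)) = 1)
    {i : Y →ₗ[Λ] E} {p : E →ₗ[Λ] X} (hi : Function.Injective i) (hex : Function.Exact i p)
    (hp : Function.Surjective p) (hns : ¬ ∃ s : X →ₗ[Λ] E, p ∘ₗ s = LinearMap.id)
    {i' : Y →ₗ[Λ] E'} {p' : E' →ₗ[Λ] X} (hi' : Function.Injective i')
    (hex' : Function.Exact i' p') (hp' : Function.Surjective p')
    (hns' : ¬ ∃ s : X →ₗ[Λ] E', p' ∘ₗ s = LinearMap.id) :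
    ∃ (c : ℂ) (φ : E' ≃ₗ[Λ] E), c ≠ 0 ∧ (∀ y, φ (i' y) = algebraMap ℂ Λ c • i y) ∧
      p ∘ₗ (φ : E' →ₗ[Λ] E) = p' := by
  let P := ProjectiveResolution.of (ModuleCat.of Λ X)
  obtain ⟨α₀, α₁, hα₀, hα₁, hα₁d⟩ := P.exists_cocycle hi hex hp
  obtain ⟨β₀, β₁, hβ₀, hβ₁, hβ₁d⟩ := P.exists_cocycle hi' hex' hp'
  have hdβ : Function.Exact (P.complex.d 1 0).hom (p' ∘ₗ β₀) :=
    hβ₀ ▸ P.exact_d_one_zero_π_f_zero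
  have hπβ : Function.Surjective (p' ∘ₗ β₀) := hβ₀ ▸ P.surjective_π_f_zero
  obtain ⟨c, w, hcw⟩ := P.exists_eq_smul_add_of_finrank_ext1_eq_one hdim hβ₁d hα₁d
    fun ⟨w, hw⟩ => hns' (hex'.exists_section_of_eq_comp hi' hp' hdβ hπβ hβ₁ hw)
  let φ := Module.End.smulLeft (M := Y) (algebraMap ℂ Λ c) (Set.algebraMap_mem_center c)
  obtain ⟨g, hgi, hgβ⟩ := hex'.exists_comp_eq_and_comp_eq hi' hdβ hπβ hβ₁ (i ∘ₗ φ)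
    (α₀ - i ∘ₗ w) <| by
      ext x
      have hα₁x : i (α₁ x) = α₀ ((P.complex.d 1 0).hom x) := LinearMap.congr_fun hα₁ x
      simp [φ, ← hα₁x, hcw x]
  have hgp : p ∘ₗ g = p' := hex'.linearMap_ext hπβ
    (by rw [LinearMap.comp_assoc, hgi, ← LinearMap.comp_assoc, hex.linearMap_comp_eq_zero,
      hex'.linearMap_comp_eq_zero, LinearMap.zero_comp])
    (by rw [LinearMap.comp_assoc, hgβ, LinearMap.comp_sub, ← LinearMap.comp_assoc,
      hex.linearMap_comp_eq_zero, LinearMap.zero_comp, sub_zero, hα₀, hβ₀])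
  have hc : c ≠ 0 := by
    rintro rfl
    exact hns (hex'.exists_section_of_comp_eq_zero hp' hgp (by ext; simp [hgi, φ]))
  have hφ : Function.Bijective φ :=
    MulAction.bijective (Units.map (algebraMap ℂ Λ : ℂ →* Λ) (Units.mk0 c hc))
  refine ⟨c, .ofBijective g (hex'.bijective_of_comp_eq hex hi hp' hφ hgi hgp), hc, fun y => ?_,
    hgp⟩
  simpa [φ] using LinearMap.congr_fun hgi y

theorem stmt_19_general (Λ : Type) [Ring Λ] [Algebra ℂ Λ]
    (X : Type) [AddCommGroup X] [Module Λ X]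
    (T' : Type) [AddCommGroup T'] [Module Λ T']
    (Y : Type) [AddCommGroup Y] [Module Λ Y]
    -- the short exact sequence `0 → Y → T' → X → 0`:
    (i : Y →ₗ[Λ] T') (f : T' →ₗ[Λ] X)
    (hi : Function.Injective i) (hf : Function.Surjective f)
    (hker : LinearMap.range i = LinearMap.ker f)
    -- `f` is a minimal right `add T`-approximation:
    (hmin : ∀ e : T' →ₗ[Λ] T', f ∘ₗ e = f → Function.Bijective e)
    -- `Ext¹(X, Y)` is one-dimensional:
    (hdim : finrank ℂ (ext1 Λ (ModuleCat.of Λ X) (ModuleCat.of Λ Y)) = 1) :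
    (¬ ∃ s : X →ₗ[Λ] T', f ∘ₗ s = LinearMap.id) ∧
      ∀ (E : Type) [AddCommGroup E] [Module Λ E] (i' : Y →ₗ[Λ] E) (p' : E →ₗ[Λ] X),
        Function.Injective i' → Function.Surjective p' →
        LinearMap.range i' = LinearMap.ker p' →
        (¬ ∃ s : X →ₗ[Λ] E, p' ∘ₗ s = LinearMap.id) →
        ∃ (c : ℂ) (φ : E ≃ₗ[Λ] T'), c ≠ 0 ∧
          (∀ y : Y, φ (i' y) = algebraMap ℂ Λ c • i y) ∧
          f ∘ₗ (φ : E →ₗ[Λ] T') = p' := by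
  have hex : Function.Exact i f := LinearMap.exact_iff.2 hker.symm
  have : Nontrivial Y := by
    by_contra h
    rw [not_nontrivial_iff_subsingleton] at h
    simp [finrank_ext1_eq_zero_of_subsingleton] at hdim
  have hns := hex.not_exists_section_of_forall_bijective hi hmin
  refine ⟨hns, fun E _ _ i' p' hi' hp' hker' hns' => ?_⟩
  exact exists_linearEquiv_of_finrank_ext1_eq_one hdim hi hex hf hns hi'
    (LinearMap.exact_iff.2 hker'.symm) hp' hns'

/-- Let `Λ` be a finite-dimensional `ℂ`-algebra with symmetric `Ext¹` dimensions, and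
`X, T` modules with `X ⊕ T` rigid and `X` indecomposable.  Let `f : T' → X` be a
surjective minimal right `add T`-approximation with kernel `Y` (included via `i`).
If `T ⊕ Y` is rigid and `Ext¹(X, Y)` is one-dimensional, then the short exact sequence
`0 → Y → T' → X → 0` is non-split, and it is the unique non-split extension of `X` by
`Y` up to isomorphism of extensions (rescaling by a nonzero scalar). -/
theorem stmt_19 (Λ : Type) [Ring Λ] [Algebra ℂ Λ] [FiniteDimensional ℂ Λ]
    (hsym : ∀ M N : ModuleCat Λ, Module.Finite Λ M → Module.Finite Λ N →
      finrank ℂ (ext1 Λ M N) = finrank ℂ (ext1 Λ N M))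
    (X : Type) [AddCommGroup X] [Module Λ X] [Module.Finite Λ X]
    (T : Type) [AddCommGroup T] [Module Λ T] [Module.Finite Λ T]
    (T' : Type) [AddCommGroup T'] [Module Λ T']
    (Y : Type) [AddCommGroup Y] [Module Λ Y]
    -- `X ⊕ T` is rigid:
    (hrigid : Subsingleton (ext1 Λ (ModuleCat.of Λ (X × T)) (ModuleCat.of Λ (X × T))))
    -- `X` is indecomposable:
    (hX0 : Nontrivial X)
    (hindec : ∀ P P' : Submodule Λ X, IsCompl P P' → P = ⊥ ∨ P = ⊤)
    -- the short exact sequence `0 → Y → T' → X → 0`: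
    (i : Y →ₗ[Λ] T') (f : T' →ₗ[Λ] X)
    (hi : Function.Injective i) (hf : Function.Surjective f)
    (hker : LinearMap.range i = LinearMap.ker f)
    -- `f` is a minimal right `add T`-approximation:
    (hT' : IsAddSummand Λ T T')
    (happrox : ∀ (Z : Type) [AddCommGroup Z] [Module Λ Z], IsAddSummand Λ T Z →
      ∀ g : Z →ₗ[Λ] X, ∃ h : Z →ₗ[Λ] T', f ∘ₗ h = g)
    (hmin : ∀ e : T' →ₗ[Λ] T', f ∘ₗ e = f → Function.Bijective e)
    -- `T ⊕ Y` is rigid: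
    (hTY : Subsingleton (ext1 Λ (ModuleCat.of Λ (T × Y)) (ModuleCat.of Λ (T × Y))))
    -- `Ext¹(X, Y)` is one-dimensional:
    (hdim : finrank ℂ (ext1 Λ (ModuleCat.of Λ X) (ModuleCat.of Λ Y)) = 1) :
    (¬ ∃ s : X →ₗ[Λ] T', f ∘ₗ s = LinearMap.id) ∧
      ∀ (E : Type) [AddCommGroup E] [Module Λ E] (i' : Y →ₗ[Λ] E) (p' : E →ₗ[Λ] X),
        Function.Injective i' → Function.Surjective p' →
        LinearMap.range i' = LinearMap.ker p' →
        (¬ ∃ s : X →ₗ[Λ] E, p' ∘ₗ s = LinearMap.id) →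
        ∃ (c : ℂ) (φ : E ≃ₗ[Λ] T'), c ≠ 0 ∧
          (∀ y : Y, φ (i' y) = algebraMap ℂ Λ c • i y) ∧
          f ∘ₗ (φ : E →ₗ[Λ] T') = p' :=
  stmt_19_general Λ X T' Y i f hi hf hker hmin hdim
end
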